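/- arXiv:2507.04361 — 3 statements merged into one kernel-verified Lean document; each statement's English description precedes it below -/
import Mathlib

section
/- Let ζ ∈ (0,1), set s = √(1−ζ²), and define u* : ℝ × ℝ → ℝ by u*(x,t) = 4·arctan( (1/ζ)·sinh(ζ·t/s) / cosh(x/s) ). Then for all (x,t) ∈ ℝ², ∂ₜₜu*(x,t) − ∂ₓₓu*(x,t) + sin(u*(x,t)) = 0. -/
/-!
Writing `u = 4 arctan φ` and using `sin (4 arctan φ) = 4φ(1 - φ²)/(1 + φ²)²`, the sine-Gordon
equation becomes `(1 + φ²)(φ_tt - φ_xx + φ) = 2φ(φ_t² - φ_x² + φ²)`. For the kink–antikink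
profile `φ = sinh (ζt/s) / (ζ cosh (x/s))` one has `φ_tt = (ζ/s)² φ` and
`φ_xx = φ (1 - 2 sech² (x/s)) / s²`, and once `s² = 1 - ζ²` both sides equal
`2φ(1 + φ²) / (s² cosh² (x/s))`.
-/

open Real

theorem sin_four_mul_arctan (y : ℝ) :
    sin (4 * arctan y) = 4 * y * (1 - y ^ 2) / (1 + y ^ 2) ^ 2 := by
  have h : sin (arctan y) * cos (arctan y) = y / (1 + y ^ 2) := by
    rw [sin_arctan, cos_arctan, div_mul_div_comm, mul_one, mul_self_sqrt (by positivity)]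
  rw [show 4 * arctan y = 2 * (2 * arctan y) by ring, sin_two_mul, sin_two_mul, cos_two_mul',
    sin_sq_arctan, cos_sq_arctan, mul_assoc 2 (sin _), h]
  field_simp
  ring

theorem deriv_deriv_const_mul_arctan_comp {φ φ' : ℝ → ℝ} {φ'' : ℝ} (c t : ℝ)
    (hφ : ∀ r, HasDerivAt φ (φ' r) r) (hφ' : HasDerivAt φ' φ'' t) :
    deriv (fun r => deriv (fun r' => c * arctan (φ r')) r) t
      = c * ((φ'' * (1 + φ t ^ 2) - 2 * φ t * φ' t ^ 2) / (1 + φ t ^ 2) ^ 2) := by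
  have hfirst : (fun r => deriv (fun r' => c * arctan (φ r')) r)
      = fun r => c * (φ' r / (1 + φ r ^ 2)) := by
    funext r
    rw [(((hφ r).arctan).const_mul c).deriv]
    ring
  have hden : HasDerivAt (fun r => 1 + φ r ^ 2) (2 * φ t * φ' t) t := by
    simpa using ((hφ t).pow 2).const_add 1
  rw [hfirst]
  refine ((hφ'.div hden (by positivity)).const_mul c).deriv.trans ?_
  field_simp

theorem sineGordon_four_arctan {φ : ℝ → ℝ → ℝ} {φt φx : ℝ → ℝ} {φtt φxx x t : ℝ}
    (ht : ∀ r, HasDerivAt (fun r => φ x r) (φt r) r) (htt : HasDerivAt φt φtt t)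
    (hx : ∀ y, HasDerivAt (fun y => φ y t) (φx y) y) (hxx : HasDerivAt φx φxx x)
    (h : (1 + φ x t ^ 2) * (φtt - φxx + φ x t)
      = 2 * φ x t * (φt t ^ 2 - φx x ^ 2 + φ x t ^ 2)) :
    deriv (fun r => deriv (fun r' => 4 * arctan (φ x r')) r) t
      - deriv (fun y => deriv (fun y' => 4 * arctan (φ y' t)) y) x
      + sin (4 * arctan (φ x t)) = 0 := by
  rw [deriv_deriv_const_mul_arctan_comp 4 t ht htt, deriv_deriv_const_mul_arctan_comp 4 x hx hxx,
    sin_four_mul_arctan]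
  set p := φ x t
  calc _ = 4 * ((1 + p ^ 2) * (φtt - φxx + p) - 2 * p * (φt t ^ 2 - φx x ^ 2 + p ^ 2))
        / (1 + p ^ 2) ^ 2 := by ring
    _ = 0 := by rw [h, sub_self, mul_zero, zero_div]

noncomputable def kinkAntikinkTan (ζ s x t : ℝ) : ℝ := (1 / ζ) * sinh (ζ * t / s) / cosh (x / s)

section KinkAntikink

variable (ζ s x t : ℝ)

theorem hasDerivAt_kinkAntikinkTan_time :
    HasDerivAt (fun r => kinkAntikinkTan ζ s x r)
      (ζ / s * ((1 / ζ) * cosh (ζ * t / s) / cosh (x / s))) t := by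
  have h := ((((hasDerivAt_id' t).const_mul ζ).div_const s).sinh.const_mul (1 / ζ)).div_const
    (cosh (x / s))
  refine h.congr_deriv ?_
  ring

theorem hasDerivAt_kinkAntikinkTan_time_deriv :
    HasDerivAt (fun r => ζ / s * ((1 / ζ) * cosh (ζ * r / s) / cosh (x / s)))
      ((ζ / s) ^ 2 * kinkAntikinkTan ζ s x t) t := by
  have h := (((((hasDerivAt_id' t).const_mul ζ).div_const s).cosh.const_mul (1 / ζ)).div_const
    (cosh (x / s))).const_mul (ζ / s)
  refine h.congr_deriv ?_
  unfold kinkAntikinkTan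
  ring

theorem hasDerivAt_kinkAntikinkTan_space :
    HasDerivAt (fun y => kinkAntikinkTan ζ s y t)
      (-((1 / ζ) * sinh (ζ * t / s) * (sinh (x / s) / cosh (x / s) ^ 2) / s)) x := by
  have h := (hasDerivAt_const x ((1 / ζ) * sinh (ζ * t / s))).fun_div
    ((hasDerivAt_id' x).div_const s).cosh (cosh_pos _).ne'
  refine h.congr_deriv ?_
  field_simp
  ring

theorem hasDerivAt_kinkAntikinkTan_space_deriv :
    HasDerivAt (fun y => -((1 / ζ) * sinh (ζ * t / s) * (sinh (y / s) / cosh (y / s) ^ 2) / s))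
      (kinkAntikinkTan ζ s x t * (1 - 2 / cosh (x / s) ^ 2) / s ^ 2) x := by
  have hy := (hasDerivAt_id' x).div_const s
  have h := ((((hy.sinh).fun_div (hy.cosh.fun_pow 2) (pow_pos (cosh_pos _) 2).ne').const_mul
    ((1 / ζ) * sinh (ζ * t / s))).div_const s).fun_neg
  refine h.congr_deriv ?_
  unfold kinkAntikinkTan
  field_simp
  rw [sinh_sq]
  ring

theorem kinkAntikinkTan_tan_equation (hζ : ζ ≠ 0) (hs : s ≠ 0)
    (hs2 : s ^ 2 = 1 - ζ ^ 2) :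
    (1 + kinkAntikinkTan ζ s x t ^ 2) * ((ζ / s) ^ 2 * kinkAntikinkTan ζ s x t
        - kinkAntikinkTan ζ s x t * (1 - 2 / cosh (x / s) ^ 2) / s ^ 2 + kinkAntikinkTan ζ s x t)
      = 2 * kinkAntikinkTan ζ s x t * ((ζ / s * ((1 / ζ) * cosh (ζ * t / s) / cosh (x / s))) ^ 2
        - (-((1 / ζ) * sinh (ζ * t / s) * (sinh (x / s) / cosh (x / s) ^ 2) / s)) ^ 2
        + kinkAntikinkTan ζ s x t ^ 2) := by
  have hc : cosh (x / s) ≠ 0 := (cosh_pos _).ne'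
  have hlin : (ζ / s) ^ 2 * kinkAntikinkTan ζ s x t
        - kinkAntikinkTan ζ s x t * (1 - 2 / cosh (x / s) ^ 2) / s ^ 2 + kinkAntikinkTan ζ s x t
      = 2 * kinkAntikinkTan ζ s x t / (s ^ 2 * cosh (x / s) ^ 2) := by
    field_simp
    linear_combination kinkAntikinkTan ζ s x t * cosh (x / s) ^ 2 * hs2
  have hquad : (ζ / s * ((1 / ζ) * cosh (ζ * t / s) / cosh (x / s))) ^ 2
        - (-((1 / ζ) * sinh (ζ * t / s) * (sinh (x / s) / cosh (x / s) ^ 2) / s)) ^ 2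
        + kinkAntikinkTan ζ s x t ^ 2
      = (1 + kinkAntikinkTan ζ s x t ^ 2) / (s ^ 2 * cosh (x / s) ^ 2) := by
    unfold kinkAntikinkTan
    field_simp
    rw [cosh_sq (ζ * t / s), sinh_sq (x / s)]
    linear_combination sinh (ζ * t / s) ^ 2 * cosh (x / s) ^ 2 * hs2
  rw [hlin, hquad]
  ring

end KinkAntikink

/-- The function u*(x,t) = 4·arctan( (1/ζ)·sinh(ζt/s) / cosh(x/s) ) with s = √(1−ζ²),
ζ ∈ (0,1), is an exact solution of the 1D sine-Gordon equation
∂ₜₜu − ∂ₓₓu + sin(u) = 0. -/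
theorem uStar_solves_sineGordon
    (ζ : ℝ) (hζ : ζ ∈ Set.Ioo (0:ℝ) 1)
    (s : ℝ) (hs : s = Real.sqrt (1 - ζ ^ 2))
    (u : ℝ → ℝ → ℝ)
    (hu : ∀ x t : ℝ,
      u x t = 4 * Real.arctan ((1 / ζ) * Real.sinh (ζ * t / s) / Real.cosh (x / s))) :
    ∀ x t : ℝ,
      deriv (fun r => deriv (fun r' => u x r') r) t
        - deriv (fun y => deriv (fun y' => u y' t) y) x
        + Real.sin (u x t) = 0 := by
  obtain ⟨hζ0, hζ1⟩ := hζ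
  have hs2 : s ^ 2 = 1 - ζ ^ 2 := by rw [hs, sq_sqrt (by nlinarith)]
  have hs0 : s ≠ 0 := by rintro rfl; nlinarith
  obtain rfl : u = fun x t => 4 * arctan (kinkAntikinkTan ζ s x t) := funext fun x => funext (hu x)
  intro x t
  exact sineGordon_four_arctan (hasDerivAt_kinkAntikinkTan_time ζ s x)
    (hasDerivAt_kinkAntikinkTan_time_deriv ζ s x t) (hasDerivAt_kinkAntikinkTan_space ζ s · t)
    (hasDerivAt_kinkAntikinkTan_space_deriv ζ s x t)
    (kinkAntikinkTan_tan_equation ζ s x t hζ0.ne' hs0 hs2)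
end

section
/- Let ζ ∈ (0,1), s = √(1−ζ²), and u*(x,t) = 4·arctan( (1/ζ)·sinh(ζ·t/s) / cosh(x/s) ). With F(u) = 1 − cos(u), the initial energy over ℝ satisfies ∫_ℝ [ (1/2)(∂ₜu*(x,0))² + (1/2)(∂ₓu*(x,0))² + F(u*(x,0)) ] dx = 16/√(1−ζ²). -/
/-!
At `t = 0` the solution vanishes identically, so the gradient and potential terms of the energy
drop out and only the kinetic term `8 / (s² cosh² (x / s))` survives. Since `tanh' = 1 / cosh²`
and `tanh → ±1` at `±∞`, its integral is `(8 / s) · 2 = 16 / s`.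
-/

open Real Filter MeasureTheory Topology

namespace Real

lemma hasDerivAt_tanh (x : ℝ) : HasDerivAt tanh (cosh x ^ 2)⁻¹ x := by
  have hquot := (hasDerivAt_sinh x).div (hasDerivAt_cosh x) (cosh_pos x).ne'
  rw [show tanh = sinh / cosh from funext tanh_eq_sinh_div_cosh]
  refine hquot.congr_deriv ?_
  rw [← sq, ← sq, cosh_sq_sub_sinh_sq, one_div]

lemma tanh_eq_one_sub_two_div (x : ℝ) : tanh x = 1 - 2 / (exp (2 * x) + 1) := by
  rw [tanh_eq_sinh_div_cosh, sinh_eq, cosh_eq, exp_neg, two_mul, exp_add]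
  field_simp
  ring

lemma tendsto_tanh_atTop : Tendsto tanh atTop (𝓝 1) := by
  have hdenom : Tendsto (fun x => exp (2 * x) + 1) atTop atTop :=
    tendsto_atTop_add_const_right _ _ <|
      tendsto_exp_atTop.comp (tendsto_id.const_mul_atTop two_pos)
  have hlim : Tendsto (fun x => 1 - 2 / (exp (2 * x) + 1)) atTop (𝓝 (1 - 0)) :=
    tendsto_const_nhds.sub (tendsto_const_nhds.div_atTop hdenom)
  rw [sub_zero] at hlim
  exact hlim.congr fun x => (tanh_eq_one_sub_two_div x).symm

lemma tendsto_tanh_atBot : Tendsto tanh atBot (𝓝 (-1)) := by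
  simpa only [Function.comp_def, tanh_neg, neg_neg] using
    (tendsto_tanh_atTop.comp tendsto_neg_atBot_atTop).neg

lemma sq_le_sinh_sq (x : ℝ) : x ^ 2 ≤ sinh x ^ 2 := by
  have h := pow_le_pow_left₀ (abs_nonneg x) (self_le_sinh_iff.mpr (abs_nonneg x)) 2
  rwa [sq_abs, ← abs_sinh, sq_abs] at h

lemma inv_cosh_sq_le_inv_one_add_sq (x : ℝ) : (cosh x ^ 2)⁻¹ ≤ (1 + x ^ 2)⁻¹ := by
  refine inv_anti₀ (by positivity) ?_
  rw [cosh_sq']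
  linarith [sq_le_sinh_sq x]

lemma integrable_inv_cosh_sq : Integrable fun x => (cosh x ^ 2)⁻¹ := by
  refine integrable_inv_one_add_sq.mono' (by fun_prop) (Eventually.of_forall fun x => ?_)
  rw [norm_of_nonneg (by positivity)]
  exact inv_cosh_sq_le_inv_one_add_sq x

lemma integral_inv_cosh_sq : ∫ x, (cosh x ^ 2)⁻¹ = 2 := by
  rw [integral_of_hasDerivAt_of_tendsto hasDerivAt_tanh integrable_inv_cosh_sq
    tendsto_tanh_atBot tendsto_tanh_atTop]
  norm_num

end Real

noncomputable def kinkAntikink (ζ s x t : ℝ) : ℝ :=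
  4 * arctan ((1 / ζ) * sinh (ζ * t / s) / cosh (x / s))

lemma kinkAntikink_zero_time (ζ s x : ℝ) : kinkAntikink ζ s x 0 = 0 := by
  simp [kinkAntikink]

lemma hasDerivAt_kinkAntikink_time {ζ : ℝ} (hζ : ζ ≠ 0) (s x : ℝ) :
    HasDerivAt (kinkAntikink ζ s x) (4 / (s * cosh (x / s))) 0 := by
  have hinner : HasDerivAt (fun t => (1 / ζ) * sinh (ζ * t / s) / cosh (x / s))
      ((1 / ζ) * (cosh (ζ * 0 / s) * (ζ / s)) / cosh (x / s)) 0 := by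
    refine (HasDerivAt.sinh ?_ |>.const_mul _).div_const _
    simpa using ((hasDerivAt_id (0 : ℝ)).const_mul ζ).div_const s
  refine (((hasDerivAt_arctan _).comp 0 hinner).const_mul 4).congr_deriv ?_
  have := cosh_pos (x / s)
  simp only [mul_zero, zero_div, sinh_zero, cosh_zero]
  field_simp
  norm_num

/-- Initial energy of the sine-Gordon solution
u*(x,t) = 4·arctan( (1/ζ)·sinh(ζt/s) / cosh(x/s) ), s = √(1−ζ²), with F(u) = 1 − cos(u):
∫_ℝ [ (1/2)(∂ₜu*(x,0))² + (1/2)(∂ₓu*(x,0))² + F(u*(x,0)) ] dx = 16/√(1−ζ²). -/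
theorem uStar_sineGordon_initial_energy
    (ζ : ℝ) (hζ : ζ ∈ Set.Ioo (0:ℝ) 1)
    (s : ℝ) (hs : s = Real.sqrt (1 - ζ ^ 2))
    (u : ℝ → ℝ → ℝ)
    (hu : ∀ x t : ℝ,
      u x t = 4 * Real.arctan ((1 / ζ) * Real.sinh (ζ * t / s) / Real.cosh (x / s)))
    (F : ℝ → ℝ) (hF : ∀ r : ℝ, F r = 1 - Real.cos r) :
    (∫ x : ℝ,
      (((1:ℝ)/2) * (deriv (fun t => u x t) 0) ^ 2
        + ((1:ℝ)/2) * (deriv (fun y => u y 0) x) ^ 2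
        + F (u x 0)))
    = 16 / Real.sqrt (1 - ζ ^ 2) := by
  obtain ⟨hζ0, hζ1⟩ := hζ
  obtain rfl : u = kinkAntikink ζ s := funext fun x => funext (hu x)
  have hs0 : 0 < s := hs ▸ sqrt_pos.mpr (by nlinarith)
  have henergy (x : ℝ) : (1 / 2) * deriv (kinkAntikink ζ s x) 0 ^ 2
      + (1 / 2) * deriv (fun y => kinkAntikink ζ s y 0) x ^ 2 + F (kinkAntikink ζ s x 0)
      = 8 / s ^ 2 * (cosh (x / s) ^ 2)⁻¹ := by
    have := cosh_pos (x / s)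
    simp only [(hasDerivAt_kinkAntikink_time hζ0.ne' s x).deriv, kinkAntikink_zero_time,
      deriv_const, hF, cos_zero]
    field_simp
    ring
  rw [integral_congr_ae (Eventually.of_forall henergy), integral_const_mul,
    Measure.integral_comp_div (fun y => (cosh y ^ 2)⁻¹), integral_inv_cosh_sq, smul_eq_mul,
    abs_of_pos hs0, ← hs]
  field_simp
  ring
end

section
/- Let n, p, q be positive natural numbers, A = U·C·Hᵀ a real p × n matrix and B = V·S·Hᵀ a real q × n matrix, where Uᵀ U = Iₙ, Vᵀ V = Iₙ, C and S are n × n diagonal matrices with diagonal entries c_i, s_i, and H is invertible. Let λ ∈ ℝ be such that c_i² + λ·s_i² ≠ 0 for every i (so that CᵀC + λ·SᵀS is invertible). Then for any b ∈ ℝᵖ and d ∈ ℝ^q, the vector η(λ) := H^{−T}·(CᵀC + λ·SᵀS)^{−1}·(Cᵀ Uᵀ b + λ·Sᵀ Vᵀ d) is the unique solution of the normal equation Aᵀ(Aη − b) + λ·Bᵀ(Bη − d) = 0. -/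
lemma mulVec_eq_iff_of_isUnit {n : ℕ} {M : Matrix (Fin n) (Fin n) ℝ}
    (hM : IsUnit M) (x y : Fin n → ℝ) :
    M.mulVec x = y ↔ x = M⁻¹.mulVec y := by
  constructor
  · intro h
    rw [← h, Matrix.mulVec_mulVec, Matrix.nonsing_inv_mul M
      ((Matrix.isUnit_iff_isUnit_det M).mp hM), Matrix.one_mulVec]
  · intro h
    rw [h, Matrix.mulVec_mulVec, Matrix.mul_nonsing_inv M
      ((Matrix.isUnit_iff_isUnit_det M).mp hM), Matrix.one_mulVec]

/-- Under the GSVD factorizations A = U·C·Hᵀ, B = V·S·Hᵀ, if c_i² + λ·s_i² ≠ 0 for all i,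
then η(λ) = H⁻ᵀ·(CᵀC + λ·SᵀS)⁻¹·(CᵀUᵀb + λ·SᵀVᵀd) is the unique solution of the normal
equation Aᵀ(Aη − b) + λ·Bᵀ(Bη − d) = 0. -/
theorem gsvd_normal_equation_unique_solution
    (n p q : ℕ) (hn : 0 < n) (hp : 0 < p) (hq : 0 < q)
    (A : Matrix (Fin p) (Fin n) ℝ) (B : Matrix (Fin q) (Fin n) ℝ)
    (U : Matrix (Fin p) (Fin n) ℝ) (V : Matrix (Fin q) (Fin n) ℝ)
    (c s : Fin n → ℝ) (H : Matrix (Fin n) (Fin n) ℝ)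
    (hU : U.transpose * U = 1) (hV : V.transpose * V = 1)
    (hH : IsUnit H)
    (hA : A = U * Matrix.diagonal c * H.transpose)
    (hB : B = V * Matrix.diagonal s * H.transpose)
    (lam : ℝ) (hlam : ∀ i : Fin n, c i ^ 2 + lam * s i ^ 2 ≠ 0)
    (b : Fin p → ℝ) (d : Fin q → ℝ) :
    ∀ η : Fin n → ℝ,
      (A.transpose.mulVec (A.mulVec η - b)
          + lam • B.transpose.mulVec (B.mulVec η - d) = 0)
      ↔ η = (H.transpose)⁻¹.mulVec
          (((Matrix.diagonal c).transpose * Matrix.diagonal c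
              + lam • ((Matrix.diagonal s).transpose * Matrix.diagonal s))⁻¹.mulVec
            ((Matrix.diagonal c).transpose.mulVec (U.transpose.mulVec b)
              + lam • (Matrix.diagonal s).transpose.mulVec (V.transpose.mulVec d))) := by
  intro η
  set D := Matrix.diagonal c with hD
  set E := Matrix.diagonal s with hE
  have hDt : D.transpose = D := Matrix.diagonal_transpose c
  have hEt : E.transpose = E := Matrix.diagonal_transpose s
  set K : Matrix (Fin n) (Fin n) ℝ := Matrix.diagonal (fun i => c i ^ 2 + lam * s i ^ 2)
    with hK
  have hKeq : D.transpose * D + lam • (E.transpose * E) = K := by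
    rw [hDt, hEt, hD, hE, hK, Matrix.diagonal_mul_diagonal, Matrix.diagonal_mul_diagonal]
    ext i j
    rcases eq_or_ne i j with rfl | hij
    · simp [Matrix.diagonal_apply_eq]; ring
    · simp [Matrix.diagonal_apply_ne _ hij]
  have hKunit : IsUnit K := by
    rw [Matrix.isUnit_iff_isUnit_det, hK, Matrix.det_diagonal, isUnit_iff_ne_zero]
    exact Finset.prod_ne_zero_iff.mpr fun i _ => hlam i
  have hHt : IsUnit H.transpose := by
    rwa [Matrix.isUnit_iff_isUnit_det, Matrix.det_transpose, ← Matrix.isUnit_iff_isUnit_det]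
  -- Aᵀ = H * D * Uᵀ, Bᵀ = H * E * Vᵀ
  have hAt : A.transpose = H * D * U.transpose := by
    rw [hA, Matrix.transpose_mul, Matrix.transpose_mul, Matrix.transpose_transpose, hDt,
      Matrix.mul_assoc]
  have hBt : B.transpose = H * E * V.transpose := by
    rw [hB, Matrix.transpose_mul, Matrix.transpose_mul, Matrix.transpose_transpose, hEt,
      Matrix.mul_assoc]
  have hAtA : A.transpose * A = H * D * D * H.transpose := by
    rw [hAt, hA]
    calc H * D * U.transpose * (U * D * H.transpose)
        = H * D * (U.transpose * U) * (D * H.transpose) := by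
          simp only [Matrix.mul_assoc]
      _ = H * D * D * H.transpose := by rw [hU]; simp only [Matrix.mul_one, Matrix.mul_assoc]
  have hBtB : B.transpose * B = H * E * E * H.transpose := by
    rw [hBt, hB]
    calc H * E * V.transpose * (V * E * H.transpose)
        = H * E * (V.transpose * V) * (E * H.transpose) := by
          simp only [Matrix.mul_assoc]
      _ = H * E * E * H.transpose := by rw [hV]; simp only [Matrix.mul_one, Matrix.mul_assoc]
  have hM : A.transpose * A + lam • (B.transpose * B) = H * K * H.transpose := by
    rw [hAtA, hBtB, ← hKeq, hDt, hEt]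
    rw [Matrix.mul_add, Matrix.add_mul, Matrix.mul_smul, Matrix.smul_mul]
    simp only [Matrix.mul_assoc]
  have hMunit : IsUnit (H * K * H.transpose) := (hH.mul hKunit).mul hHt
  -- rewrite the equation as (H K Hᵀ) η = r
  have lhs_eq : A.transpose.mulVec (A.mulVec η - b)
        + lam • B.transpose.mulVec (B.mulVec η - d)
      = (H * K * H.transpose).mulVec η
        - (A.transpose.mulVec b + lam • B.transpose.mulVec d) := by
    rw [← hM]
    simp only [Matrix.mulVec_sub, Matrix.add_mulVec, ← Matrix.mulVec_mulVec,
      Matrix.smul_mulVec, smul_sub]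
    module
  have key : (A.transpose.mulVec (A.mulVec η - b)
        + lam • B.transpose.mulVec (B.mulVec η - d) = 0)
      ↔ (H * K * H.transpose).mulVec η
        = A.transpose.mulVec b + lam • B.transpose.mulVec d := by
    rw [lhs_eq, sub_eq_zero]
  rw [key, mulVec_eq_iff_of_isUnit hMunit]
  -- now simplify the RHS
  have hinv : (H * K * H.transpose)⁻¹ = (H.transpose)⁻¹ * K⁻¹ * H⁻¹ := by
    rw [Matrix.mul_inv_rev, Matrix.mul_inv_rev]
    simp [Matrix.mul_assoc]
  have hr : A.transpose.mulVec b + lam • B.transpose.mulVec d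
      = H.mulVec (D.mulVec (U.transpose.mulVec b) + lam • E.mulVec (V.transpose.mulVec d)) := by
    rw [hAt, hBt]
    simp only [Matrix.mulVec_add, ← Matrix.mulVec_mulVec, Matrix.mulVec_smul]
  have hcancel : ∀ w : Fin n → ℝ, H⁻¹.mulVec (H.mulVec w) = w := by
    intro w
    rw [Matrix.mulVec_mulVec, Matrix.nonsing_inv_mul H
      ((Matrix.isUnit_iff_isUnit_det H).mp hH), Matrix.one_mulVec]
  rw [hinv, hr, ← hKeq, hDt, hEt]
  simp only [← Matrix.mulVec_mulVec, hcancel]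
end
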